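/- Let v ∈ L^q(ℝ³; ℝ³) with 1 ≤ q < ∞ and let φ : ℝ³ → ℝ be nonnegative, radial, compactly supported, with unit integral, and set φ^ε(ℓ) = ε⁻³ φ(ℓ/ε). Define v_L^ε(x) = ∫_{ℝ³} φ^ε(ℓ) (n(ℓ) ⊗ n(ℓ)) v(x + ℓ) dℓ with n(ℓ) = ℓ/‖ℓ‖. Then ‖v_L^ε - (1/3) v‖_{L^q} → 0 as ε → 0. -/

import Mathlib

/-!
A radial probability density `ψ` has isotropic second moments, `∫ ψ(ℓ) (n ⊗ n) dℓ = I / 3`: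
reflecting one coordinate kills the off-diagonal entries, permuting coordinates equalises the
diagonal ones, and their sum is `∫ ψ = 1`. Hence
`v_L(x) - v(x) / 3 = ∫ ψ(ℓ) (n ⊗ n) (v(x + ℓ) - v(x)) dℓ`, and since `n ⊗ n` is the orthogonal
projection onto `ℝ ℓ`, Minkowski's inequality for the probability measure `ψ dℓ` bounds the
`L^q` norm of this by `sup ‖v(· + ℓ) - v‖_q` over `ℓ ∈ supp ψ`. For `ψ = φ^ε` this support lies
in a ball of radius `O(ε)`, so the bound tends to zero by continuity of translation in `L^q`.
-/

open MeasureTheory Filter Topology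
open scoped ENNReal

section Minkowski

variable {X Y : Type*} [MeasurableSpace X] [MeasurableSpace Y] {μ : Measure X} {ν : Measure Y}

theorem rpow_lintegral_le_lintegral_rpow [IsProbabilityMeasure ν] {r : ℝ} (hr : 1 ≤ r)
    {f : Y → ℝ≥0∞} (hf : AEMeasurable f ν) : (∫⁻ y, f y ∂ν) ^ r ≤ ∫⁻ y, f y ^ r ∂ν := by
  have hr0 : 0 < r := zero_lt_one.trans_le hr
  have h := eLpNorm_le_eLpNorm_of_exponent_le (p := 1) (q := ENNReal.ofReal r)
    (ENNReal.one_le_ofReal.2 hr) hf.aestronglyMeasurable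
  rw [eLpNorm_one_eq_lintegral_enorm, eLpNorm_eq_lintegral_rpow_enorm_toReal
    (by simpa using hr0) ENNReal.ofReal_ne_top, ENNReal.toReal_ofReal hr0.le] at h
  simp only [enorm_eq_self] at h
  calc (∫⁻ y, f y ∂ν) ^ r ≤ ((∫⁻ y, f y ^ r ∂ν) ^ (1 / r)) ^ r := ENNReal.rpow_le_rpow h hr0.le
    _ = ∫⁻ y, f y ^ r ∂ν := by rw [one_div, ENNReal.rpow_inv_rpow hr0.ne']

theorem eLpNorm_lintegral_le_of_ae_le [SFinite μ] [IsProbabilityMeasure ν] {p : ℝ≥0∞}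
    (hp : 1 ≤ p) (hp_top : p ≠ ∞) {F : X → Y → ℝ≥0∞} (hF : Measurable (Function.uncurry F))
    {C : ℝ≥0∞} (hC : ∀ᵐ y ∂ν, eLpNorm (F · y) p μ ≤ C) :
    eLpNorm (fun x ↦ ∫⁻ y, F x y ∂ν) p μ ≤ C := by
  have hp0 : p ≠ 0 := (zero_lt_one.trans_le hp).ne'
  have hr : 1 ≤ p.toReal := by simpa using ENNReal.toReal_mono hp_top hp
  have hr0 : 0 < p.toReal := zero_lt_one.trans_le hr
  rw [eLpNorm_eq_lintegral_rpow_enorm_toReal hp0 hp_top]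
  simp only [enorm_eq_self]
  have hC' : ∀ᵐ y ∂ν, ∫⁻ x, F x y ^ p.toReal ∂μ ≤ C ^ p.toReal := by
    filter_upwards [hC] with y hy
    rw [eLpNorm_eq_lintegral_rpow_enorm_toReal hp0 hp_top] at hy
    simp only [enorm_eq_self] at hy
    simpa [← ENNReal.rpow_mul, hr0.ne'] using ENNReal.rpow_le_rpow hy hr0.le
  calc (∫⁻ x, (∫⁻ y, F x y ∂ν) ^ p.toReal ∂μ) ^ (1 / p.toReal)
      ≤ (∫⁻ x, ∫⁻ y, F x y ^ p.toReal ∂ν ∂μ) ^ (1 / p.toReal) := by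
        gcongr with x
        exact rpow_lintegral_le_lintegral_rpow hr (hF.comp measurable_prodMk_left).aemeasurable
    _ = (∫⁻ y, ∫⁻ x, F x y ^ p.toReal ∂μ ∂ν) ^ (1 / p.toReal) := by
        rw [lintegral_lintegral_swap (hF.pow_const _).aemeasurable]
    _ ≤ (∫⁻ _, C ^ p.toReal ∂ν) ^ (1 / p.toReal) := by gcongr 1; exact lintegral_mono_ae hC'
    _ = C := by simp [← ENNReal.rpow_mul, hr0.ne']

end Minkowski

theorem tendsto_eLpNorm_comp_add_sub {G E : Type*} [AddGroup G] [TopologicalSpace G]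
    [IsTopologicalAddGroup G] [R1Space G] [MeasurableSpace G] [BorelSpace G]
    [NormedAddCommGroup E] {μ : Measure G} [IsLocallyFiniteMeasure μ] [μ.InnerRegularCompactLTTop]
    [μ.IsAddRightInvariant] {p : ℝ≥0∞} [Fact (1 ≤ p)] (hp : p ≠ ∞) {f : G → E}
    (hf : MemLp f p μ) :
    Tendsto (fun ℓ ↦ eLpNorm (fun x ↦ f (x + ℓ) - f x) p μ) (𝓝 0) (𝓝 0) := by
  let shift : C(G, C(G, G)) := ContinuousMap.curry ⟨fun a : G × G ↦ a.2 + a.1, by fun_prop⟩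
  have hshift : ∀ ℓ, MeasurePreserving (shift ℓ) μ μ := measurePreserving_add_right μ
  let F : G → Lp E p μ := fun ℓ ↦ Lp.compMeasurePreserving (shift ℓ) (hshift ℓ) (hf.toLp f)
  have hF : Continuous F := continuous_const.compMeasurePreservingLp shift.continuous hshift hp
  have hF_ae : ∀ ℓ, F ℓ =ᵐ[μ] fun x ↦ f (x + ℓ) := fun ℓ ↦
    (Lp.coeFn_compMeasurePreserving _ (hshift ℓ)).trans <|
      hf.coeFn_toLp.comp_tendsto (hshift ℓ).quasiMeasurePreserving.tendsto_ae
  have h := tendsto_iff_edist_tendsto_0.1 (hF.tendsto 0)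
  refine h.congr fun ℓ ↦ ?_
  rw [Lp.edist_def]
  refine eLpNorm_congr_ae ?_
  filter_upwards [hF_ae ℓ, hF_ae 0] with x h1 h2
  simp [h1, h2]

theorem integral_mul_comp_linearIsometryEquiv_of_radial {E : Type*} [NormedAddCommGroup E]
    [InnerProductSpace ℝ E] [FiniteDimensional ℝ E] [MeasurableSpace E] [BorelSpace E]
    {ψ : E → ℝ} (hψ : ∀ a b : E, ‖a‖ = ‖b‖ → ψ a = ψ b) (e : E ≃ₗᵢ[ℝ] E) (g : E → ℝ) :
    ∫ ℓ, ψ ℓ * g (e ℓ) = ∫ ℓ, ψ ℓ * g ℓ := by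
  calc ∫ ℓ, ψ ℓ * g (e ℓ) = ∫ ℓ, ψ (e ℓ) * g (e ℓ) := by
        simp only [hψ _ _ (e.norm_map _)]
    _ = ∫ ℓ, ψ ℓ * g ℓ :=
        e.measurePreserving.integral_comp' (f := e.toHomeomorph.toMeasurableEquiv) fun ℓ ↦ ψ ℓ * g ℓ

theorem measurable_starProjection_span_singleton {E : Type*} [NormedAddCommGroup E]
    [InnerProductSpace ℝ E] [MeasurableSpace E] [BorelSpace E] [SecondCountableTopology E] :
    Measurable fun p : E × E ↦ (ℝ ∙ p.1).starProjection p.2 := by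
  simp_rw [Submodule.starProjection_singleton, RCLike.ofReal_real_eq_id, id]
  exact ((measurable_fst.inner measurable_snd).div (measurable_fst.norm.pow_const 2)).smul
    measurable_fst

theorem MeasureTheory.Integrable.smul_starProjection {E : Type*} [NormedAddCommGroup E]
    [InnerProductSpace ℝ E] [MeasurableSpace E] [BorelSpace E] [SecondCountableTopology E]
    {μ : Measure E} {ψ : E → ℝ} {u : E → E} (h : Integrable (fun ℓ ↦ ψ ℓ • u ℓ) μ)
    (hψ : AEStronglyMeasurable ψ μ) (hu : AEStronglyMeasurable u μ) :
    Integrable (fun ℓ ↦ ψ ℓ • (ℝ ∙ ℓ).starProjection (u ℓ)) μ := by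
  refine h.mono (hψ.smul ?_) (.of_forall fun ℓ ↦ ?_)
  · exact (measurable_starProjection_span_singleton.comp_aemeasurable
      (aemeasurable_id.prodMk hu.aemeasurable)).aestronglyMeasurable
  · simp only [norm_smul]
    gcongr
    exact Submodule.norm_starProjection_apply_le _ _

namespace EuclideanSpace

variable {ι : Type*} [Fintype ι]

theorem abs_apply_div_norm_le_one (ℓ : EuclideanSpace ℝ ι) (i : ι) : |ℓ i / ‖ℓ‖| ≤ 1 := by
  rw [abs_div, abs_norm]
  exact div_le_one_of_le₀ (PiLp.norm_apply_le ℓ i) (norm_nonneg ℓ)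

theorem sum_apply_div_norm_mul_self {ℓ : EuclideanSpace ℝ ι} (hℓ : ℓ ≠ 0) :
    ∑ k, ℓ k / ‖ℓ‖ * (ℓ k / ‖ℓ‖) = 1 := by
  simp_rw [← sq, div_pow, ← Finset.sum_div, ← real_norm_sq_eq]
  exact div_self (by positivity)

theorem integral_apply {α : Type*} [MeasurableSpace α] {μ : Measure α}
    {f : α → EuclideanSpace ℝ ι} (hf : Integrable f μ) (i : ι) :
    (∫ a, f a ∂μ) i = ∫ a, f a i ∂μ :=
  ((proj i).integral_comp_comm hf).symm

theorem starProjection_span_singleton_apply (ℓ u : EuclideanSpace ℝ ι) (i : ι) :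
    (ℝ ∙ ℓ).starProjection u i = ℓ i / ‖ℓ‖ * ∑ j, ℓ j / ‖ℓ‖ * u j := by
  rw [Submodule.starProjection_singleton, PiLp.smul_apply, PiLp.inner_apply, smul_eq_mul]
  simp only [RCLike.inner_apply, conj_trivial, RCLike.ofReal_real_eq_id, id, Finset.mul_sum,
    Finset.sum_div, Finset.sum_mul]
  refine Finset.sum_congr rfl fun j _ ↦ ?_
  ring

variable {ψ : EuclideanSpace ℝ ι → ℝ}

theorem integrable_mul_apply_div_norm_mul (hψ : Integrable ψ) (i j : ι) :
    Integrable fun ℓ : EuclideanSpace ℝ ι ↦ ψ ℓ * (ℓ i / ‖ℓ‖ * (ℓ j / ‖ℓ‖)) := by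
  refine (hψ.bdd_mul (c := 1) (by fun_prop) (.of_forall fun ℓ ↦ ?_)).congr
    (.of_forall fun ℓ ↦ mul_comm _ _)
  rw [norm_mul, Real.norm_eq_abs, Real.norm_eq_abs]
  exact mul_le_one₀ (abs_apply_div_norm_le_one ℓ i) (abs_nonneg _) (abs_apply_div_norm_le_one ℓ j)

theorem integral_radial_mul_apply_div_norm_mul_of_ne
    (hrad : ∀ a b : EuclideanSpace ℝ ι, ‖a‖ = ‖b‖ → ψ a = ψ b) {i j : ι} (hij : i ≠ j) :
    ∫ ℓ, ψ ℓ * (ℓ i / ‖ℓ‖ * (ℓ j / ‖ℓ‖)) = 0 := by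
  classical
  let e := LinearIsometryEquiv.piLpCongrRight 2 fun k : ι ↦
    if k = i then LinearIsometryEquiv.neg ℝ else LinearIsometryEquiv.refl ℝ ℝ
  have h := integral_mul_comp_linearIsometryEquiv_of_radial hrad e
    fun ℓ ↦ ℓ i / ‖ℓ‖ * (ℓ j / ‖ℓ‖)
  simp only [e.norm_map] at h
  simp only [e, LinearIsometryEquiv.piLpCongrRight_apply, ↓reduceIte, hij.symm,
    LinearIsometryEquiv.coe_neg, LinearIsometryEquiv.coe_refl, id_eq, neg_div, neg_mul, mul_neg,
    integral_neg] at h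
  linarith

theorem integral_radial_mul_apply_div_norm_mul_self (hψ : Integrable ψ)
    (hrad : ∀ a b : EuclideanSpace ℝ ι, ‖a‖ = ‖b‖ → ψ a = ψ b) (i : ι) :
    ∫ ℓ, ψ ℓ * (ℓ i / ‖ℓ‖ * (ℓ i / ‖ℓ‖)) = (Fintype.card ι : ℝ)⁻¹ * ∫ ℓ, ψ ℓ := by
  classical
  -- `{0}` is null only in positive dimension
  have : Nonempty ι := ⟨i⟩
  have hswap : ∀ k, ∫ ℓ, ψ ℓ * (ℓ k / ‖ℓ‖ * (ℓ k / ‖ℓ‖)) =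
      ∫ ℓ, ψ ℓ * (ℓ i / ‖ℓ‖ * (ℓ i / ‖ℓ‖)) := by
    intro k
    have h := integral_mul_comp_linearIsometryEquiv_of_radial hrad
      (LinearIsometryEquiv.piLpCongrLeft 2 ℝ ℝ (Equiv.swap i k)) fun ℓ ↦ ℓ i / ‖ℓ‖ * (ℓ i / ‖ℓ‖)
    simp only [LinearIsometryEquiv.norm_map] at h
    simpa [Equiv.piCongrLeft'_apply] using h
  have hsum : ∑ k, ∫ ℓ, ψ ℓ * (ℓ k / ‖ℓ‖ * (ℓ k / ‖ℓ‖)) = ∫ ℓ, ψ ℓ := by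
    rw [← integral_finsetSum _ fun k _ ↦ integrable_mul_apply_div_norm_mul hψ k k]
    refine integral_congr_ae ?_
    filter_upwards [measure_singleton (μ := volume) (0 : EuclideanSpace ℝ ι) |> compl_mem_ae_iff.2]
      with ℓ hℓ
    rw [← Finset.mul_sum, sum_apply_div_norm_mul_self hℓ, mul_one]
  simp only [hswap, Finset.sum_const, Finset.card_univ, nsmul_eq_mul] at hsum
  rw [← hsum, inv_mul_cancel_left₀ (Nat.cast_ne_zero.2 Fintype.card_ne_zero)]

theorem integral_radial_smul_starProjection (hψ : Integrable ψ)
    (hrad : ∀ a b : EuclideanSpace ℝ ι, ‖a‖ = ‖b‖ → ψ a = ψ b) (u : EuclideanSpace ℝ ι) :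
    ∫ ℓ, ψ ℓ • (ℝ ∙ ℓ).starProjection u = ((Fintype.card ι : ℝ)⁻¹ * ∫ ℓ, ψ ℓ) • u := by
  have hint :=
    Integrable.smul_starProjection (hψ.smul_const u) hψ.1 aestronglyMeasurable_const
  ext i
  rw [integral_apply hint]
  have hexpand : ∀ ℓ : EuclideanSpace ℝ ι, (ψ ℓ • (ℝ ∙ ℓ).starProjection u) i =
      ∑ j, ψ ℓ * (ℓ i / ‖ℓ‖ * (ℓ j / ‖ℓ‖)) * u j := by
    intro ℓ
    simp only [PiLp.smul_apply, smul_eq_mul, starProjection_span_singleton_apply,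
      Finset.mul_sum]
    exact Finset.sum_congr rfl fun j _ ↦ by ring
  simp only [hexpand]
  rw [integral_finsetSum _ fun j _ ↦ (integrable_mul_apply_div_norm_mul hψ i j).mul_const _,
    Finset.sum_eq_single i]
  · rw [integral_mul_const, integral_radial_mul_apply_div_norm_mul_self hψ hrad]
    simp
  · intro j _ hji
    rw [integral_mul_const, integral_radial_mul_apply_div_norm_mul_of_ne hrad hji.symm, zero_mul]
  · simp

end EuclideanSpace

section LongitudinalAverage

variable {ι : Type*} [Fintype ι]

/-- `∫ ψ(ℓ) (n ⊗ n) v(x + ℓ) dℓ` with `n = ℓ / ‖ℓ‖`, written in coordinates. -/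
noncomputable def longitudinalAverage (ψ : EuclideanSpace ℝ ι → ℝ)
    (v : EuclideanSpace ℝ ι → EuclideanSpace ℝ ι) (x : EuclideanSpace ℝ ι) :
    EuclideanSpace ℝ ι :=
  (EuclideanSpace.equiv ι ℝ).symm fun i ↦
    ∫ ℓ, ψ ℓ * ((ℓ i / ‖ℓ‖) * ∑ j, (ℓ j / ‖ℓ‖) * v (x + ℓ) j)

variable {ψ : EuclideanSpace ℝ ι → ℝ} {v : EuclideanSpace ℝ ι → EuclideanSpace ℝ ι}

theorem longitudinalAverage_eq_integral {x : EuclideanSpace ℝ ι}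
    (h : Integrable fun ℓ ↦ ψ ℓ • (ℝ ∙ ℓ).starProjection (v (x + ℓ))) :
    longitudinalAverage ψ v x = ∫ ℓ, ψ ℓ • (ℝ ∙ ℓ).starProjection (v (x + ℓ)) := by
  ext i
  simp [longitudinalAverage, EuclideanSpace.integral_apply h,
    EuclideanSpace.starProjection_span_singleton_apply]

theorem longitudinalAverage_congr_ae {w : EuclideanSpace ℝ ι → EuclideanSpace ℝ ι}
    (hvw : v =ᵐ[volume] w) : longitudinalAverage ψ v = longitudinalAverage ψ w := by
  funext x
  have hvw_shift : ∀ᵐ ℓ, v (x + ℓ) = w (x + ℓ) :=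
    hvw.comp_tendsto (measurePreserving_add_left volume x).quasiMeasurePreserving.tendsto_ae
  simp only [longitudinalAverage]
  congr 1
  funext i
  refine integral_congr_ae ?_
  filter_upwards [hvw_shift] with ℓ hℓ
  rw [hℓ]

theorem enorm_longitudinalAverage_sub_le (hψ : Integrable ψ)
    (hrad : ∀ a b : EuclideanSpace ℝ ι, ‖a‖ = ‖b‖ → ψ a = ψ b) (hψ1 : ∫ ℓ, ψ ℓ = 1)
    (hv : AEStronglyMeasurable v) (x : EuclideanSpace ℝ ι) :
    ‖longitudinalAverage ψ v x - (Fintype.card ι : ℝ)⁻¹ • v x‖ₑ ≤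
      ∫⁻ ℓ, ‖ψ ℓ‖ₑ * ‖v (x + ℓ) - v x‖ₑ := by
  obtain hfin | hfin := (le_top : ∫⁻ ℓ, ‖ψ ℓ‖ₑ * ‖v (x + ℓ) - v x‖ₑ ≤ ∞).lt_or_eq
  swap
  · exact hfin ▸ le_top
  have hvx : AEStronglyMeasurable fun ℓ ↦ v (x + ℓ) :=
    hv.comp_quasiMeasurePreserving (measurePreserving_add_left volume x).quasiMeasurePreserving
  have hdiff : Integrable fun ℓ ↦ ψ ℓ • (v (x + ℓ) - v x) :=
    ⟨hψ.1.smul (hvx.sub aestronglyMeasurable_const), by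
      simpa only [HasFiniteIntegral, enorm_smul] using hfin⟩
  have hshift : Integrable fun ℓ ↦ ψ ℓ • v (x + ℓ) :=
    (hdiff.add (hψ.smul_const (v x))).congr (.of_forall fun ℓ ↦ by simp [smul_sub])
  have hmoment := EuclideanSpace.integral_radial_smul_starProjection hψ hrad (v x)
  rw [hψ1, mul_one] at hmoment
  rw [longitudinalAverage_eq_integral (Integrable.smul_starProjection hshift hψ.1 hvx),
    ← hmoment, ← integral_sub (Integrable.smul_starProjection hshift hψ.1 hvx)
      (Integrable.smul_starProjection (hψ.smul_const (v x)) hψ.1 aestronglyMeasurable_const)]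
  refine (enorm_integral_le_lintegral_enorm _).trans (lintegral_mono fun ℓ ↦ ?_)
  rw [← smul_sub, ← map_sub, enorm_smul]
  gcongr
  exact enorm_le_iff_norm_le.2 (Submodule.norm_starProjection_apply_le _ _)

theorem eLpNorm_longitudinalAverage_sub_le {p : ℝ≥0∞} (hp : 1 ≤ p) (hp_top : p ≠ ∞)
    (hψ0 : ∀ ℓ, 0 ≤ ψ ℓ) (hψ : Integrable ψ)
    (hrad : ∀ a b : EuclideanSpace ℝ ι, ‖a‖ = ‖b‖ → ψ a = ψ b) (hψ1 : ∫ ℓ, ψ ℓ = 1)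
    (hv : AEStronglyMeasurable v) {C : ℝ≥0∞}
    (hC : ∀ ℓ ∈ Function.support ψ, eLpNorm (fun x ↦ v (x + ℓ) - v x) p volume ≤ C) :
    eLpNorm (fun x ↦ longitudinalAverage ψ v x - (Fintype.card ι : ℝ)⁻¹ • v x) p volume ≤ C := by
  set w := hv.mk v
  have hvw : v =ᵐ[volume] w := hv.ae_eq_mk
  have hw : Measurable w := hv.stronglyMeasurable_mk.measurable
  have hvw_shift (ℓ : EuclideanSpace ℝ ι) :
      (fun x ↦ v (x + ℓ) - v x) =ᵐ[volume] fun x ↦ w (x + ℓ) - w x := by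
    filter_upwards [hvw, hvw.comp_tendsto
      (measurePreserving_add_right volume ℓ).quasiMeasurePreserving.tendsto_ae] with x h0 hℓ
    simp_all
  set ν := volume.withDensity fun ℓ ↦ ‖ψ ℓ‖ₑ with hν
  have hψe : AEMeasurable fun ℓ ↦ ‖ψ ℓ‖ₑ := hψ.1.enorm
  have : IsProbabilityMeasure ν := ⟨by
    rw [hν, withDensity_apply _ MeasurableSet.univ, Measure.restrict_univ,
      lintegral_enorm_of_nonneg hψ0,
      ← ofReal_integral_eq_lintegral_ofReal hψ (ae_of_all _ hψ0), hψ1, ENNReal.ofReal_one]⟩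
  calc eLpNorm (fun x ↦ longitudinalAverage ψ v x - (Fintype.card ι : ℝ)⁻¹ • v x) p volume
      = eLpNorm (fun x ↦ longitudinalAverage ψ w x - (Fintype.card ι : ℝ)⁻¹ • w x) p volume := by
        rw [longitudinalAverage_congr_ae hvw]
        exact eLpNorm_congr_ae (hvw.mono fun x hx ↦ by simp only [hx])
    _ ≤ eLpNorm (fun x ↦ ∫⁻ ℓ, ‖w (x + ℓ) - w x‖ₑ ∂ν) p volume := by
        refine eLpNorm_mono_enorm fun x ↦ ?_
        rw [enorm_eq_self, lintegral_withDensity_eq_lintegral_mul₀ hψe (by fun_prop)]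
        exact enorm_longitudinalAverage_sub_le hψ hrad hψ1 hw.aestronglyMeasurable x
    _ ≤ C := by
        refine eLpNorm_lintegral_le_of_ae_le hp hp_top (by fun_prop) ?_
        refine (ae_withDensity_iff' hψe).2 (ae_of_all _ fun ℓ hℓ ↦ ?_)
        rw [eLpNorm_enorm, ← eLpNorm_congr_ae (hvw_shift ℓ)]
        exact hC ℓ (by simpa using hℓ)

end LongitudinalAverage

section Rescaling

variable {E : Type*} [NormedAddCommGroup E] [NormedSpace ℝ E]

theorem integral_inv_pow_finrank_mul_comp_inv_smul [FiniteDimensional ℝ E] [MeasurableSpace E]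
    [BorelSpace E] (μ : Measure E) [μ.IsAddHaarMeasure] (φ : E → ℝ) {ε : ℝ} (hε : 0 < ε) :
    ∫ ℓ, (ε ^ Module.finrank ℝ E)⁻¹ * φ (ε⁻¹ • ℓ) ∂μ = ∫ ℓ, φ ℓ ∂μ := by
  rw [integral_const_mul, Measure.integral_comp_inv_smul_of_nonneg μ φ hε.le, smul_eq_mul,
    inv_mul_cancel_left₀ (by positivity)]

theorem HasCompactSupport.eventually_support_comp_inv_smul_subset_ball {φ : E → ℝ}
    (hφ : HasCompactSupport φ) {r : ℝ} (hr : 0 < r) :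
    ∀ᶠ ε in 𝓝[>] (0 : ℝ), Function.support (fun ℓ ↦ φ (ε⁻¹ • ℓ)) ⊆ Metric.ball 0 r := by
  obtain ⟨R, hR, hφR⟩ := hφ.isCompact.isBounded.subset_closedBall_lt 0 0
  filter_upwards [Ioo_mem_nhdsGT (div_pos hr hR)] with ε ⟨hε, hεr⟩ ℓ hℓ
  have hℓR : ‖ε⁻¹ • ℓ‖ ≤ R := by simpa using hφR (subset_tsupport φ hℓ)
  rw [norm_smul, norm_inv, Real.norm_of_nonneg hε.le, inv_mul_le_iff₀ hε] at hℓR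
  rw [mem_ball_zero_iff]
  calc ‖ℓ‖ ≤ ε * R := hℓR
    _ < r / R * R := by gcongr
    _ = r := div_mul_cancel₀ r hR.ne'

end Rescaling

/-- Mollified longitudinal average converges to (1/3)v in L^q. -/
theorem mollified_longitudinal_converges (q : ℝ≥0∞) (hq1 : 1 ≤ q) (hq2 : q ≠ ⊤)
    (v : EuclideanSpace ℝ (Fin 3) → EuclideanSpace ℝ (Fin 3)) (hv : MemLp v q)
    (φ : EuclideanSpace ℝ (Fin 3) → ℝ) (hφpos : ∀ ℓ, 0 ≤ φ ℓ)
    (hφrad : ∀ ℓ ℓ' : EuclideanSpace ℝ (Fin 3), ‖ℓ‖ = ‖ℓ'‖ → φ ℓ = φ ℓ')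
    (hφsupp : HasCompactSupport φ) (hφint : (∫ ℓ, φ ℓ) = 1) :
    Filter.Tendsto
      (fun ε : ℝ =>
        eLpNorm (fun x =>
          ((EuclideanSpace.equiv (Fin 3) ℝ).symm fun i =>
            ∫ ℓ : EuclideanSpace ℝ (Fin 3),
              (ε ^ 3)⁻¹ * φ (ε⁻¹ • ℓ) * ((ℓ i / ‖ℓ‖) * ∑ j, (ℓ j / ‖ℓ‖) * v (x + ℓ) j))
          - (3 : ℝ)⁻¹ • v x) q volume)
      (nhdsWithin 0 (Set.Ioi 0)) (nhds 0) := by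
  have : Fact (1 ≤ q) := ⟨hq1⟩
  have hφ : Integrable φ := Integrable.of_integral_ne_zero (by simp [hφint])
  refine ENNReal.tendsto_nhds_zero.2 fun η hη ↦ ?_
  obtain ⟨r, hr, hshift⟩ := Metric.eventually_nhds_iff.1
    (ENNReal.tendsto_nhds_zero.1 (tendsto_eLpNorm_comp_add_sub hq2 hv) η hη)
  filter_upwards [self_mem_nhdsWithin, hφsupp.eventually_support_comp_inv_smul_subset_ball hr]
    with ε (hε : 0 < ε) hsupp
  have hψ1 := integral_inv_pow_finrank_mul_comp_inv_smul volume φ hε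
  rw [finrank_euclideanSpace_fin, hφint] at hψ1
  simpa [longitudinalAverage] using eLpNorm_longitudinalAverage_sub_le
    (ψ := fun ℓ ↦ (ε ^ 3)⁻¹ * φ (ε⁻¹ • ℓ)) hq1 hq2
    (fun ℓ ↦ mul_nonneg (by positivity) (hφpos _))
    ((hφ.comp_smul (inv_ne_zero hε.ne')).const_mul _)
    (fun a b hab ↦ by rw [hφrad (ε⁻¹ • a) (ε⁻¹ • b) (by simp [norm_smul, hab])]) hψ1 hv.1
    fun ℓ hℓ ↦ hshift (by simpa using hsupp (Function.support_mul_subset_right _ _ hℓ))
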